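/- If a directed multigraph whose edges are labeled WW, WR, or RW contains a cycle, and every WW or WR edge (T_i, T_j) implies T_i commits before T_j starts (in a strict total commit/start order), then the cycle must contain at least one RW edge. -/
import Mathlib


/-- Edge labels in a transaction dependency graph. -/
inductive Lbl | WW | WR | RW
deriving DecidableEq

/-- If a directed multigraph whose edges are labeled WW, WR, or RW contains a
cycle, and every WW or WR edge (Tᵢ, Tⱼ) implies Tᵢ commits before Tⱼ starts,
then the cycle must contain at least one RW edge. -/
theorem stmt_0 {V : Type*} (E : V → V → Lbl → Prop)
    (start commit : V → ℝ)
    (hsc : ∀ T, start T < commit T)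
    (hww : ∀ i j l, E i j l → l ≠ Lbl.RW → commit i < start j)
    (n : ℕ) (hn : 0 < n) (f : ZMod n → V) (lbl : ZMod n → Lbl)
    (hcyc : ∀ i : ZMod n, E (f i) (f (i + 1)) (lbl i)) :
    ∃ i : ZMod n, lbl i = Lbl.RW := by
  by_contra h
  push_neg at h
  have step : ∀ i : ZMod n, commit (f i) < commit (f (i + 1)) := fun i =>
    lt_trans (hww _ _ _ (hcyc i) (h i)) (hsc _)
  have key : ∀ k : ℕ, commit (f 0) < commit (f ((k + 1 : ℕ) : ZMod n)) := by
    intro k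
    induction k with
    | zero => simpa using step 0
    | succ k ih =>
      refine lt_trans ih ?_
      have := step ((k + 1 : ℕ) : ZMod n)
      push_cast at this ⊢
      convert this using 3
  have hk := key (n - 1)
  rw [Nat.sub_add_cancel hn] at hk
  simp [ZMod.natCast_self] at hk
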